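/- For every odd t ≥ 5, the ring R_t is contained in a blowup of the 3-graph Q_3, where Q_3 is obtained from R_3 by adding the two edges {x_1, y_1, x_0} and {x_1, y_1, y_0}. -/
import Mathlib

/-- The edge set of the ring 3-graph `R_t`. -/
def ringEdges (t : ℕ) : Set (Finset (ZMod t × Bool)) :=
  {e | ∃ (i : ZMod t) (b : Bool), e = {(i, false), (i, true), (i + 1, b)}}

/-- The edge set of `Q_3`: `R_3` together with the extra edges `{x_1, y_1, x_0}` and
`{x_1, y_1, y_0}`. -/
def Q3Edges : Set (Finset (ZMod 3 × Bool)) :=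
  ringEdges 3 ∪
    {e | ∃ b : Bool, e = {((1 : ZMod 3), false), ((1 : ZMod 3), true), ((0 : ZMod 3), b)}}

/-- The edge set of the `s`-blowup of a 3-graph with edge set `E`. -/
def blowupEdges {V : Type*} [DecidableEq V] (E : Set (Finset V)) (s : ℕ) :
    Set (Finset (V × Fin s)) :=
  {e' | ∃ e ∈ E, ∃ g : V → Fin s, e' = e.image (fun v => (v, g v))}

/-- The walk function: a closed walk of length `t` in the digraph on `ZMod 3` with
arcs `0→1, 1→2, 2→0, 1→0`. -/
def wfun (t n : ℕ) : ZMod 3 :=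
  if n < t - 2 then ((n % 2 : ℕ) : ZMod 3) else if n = t - 2 then 1 else 2

lemma wfun_arc (t n : ℕ) (ht : 5 ≤ t) (hodd : Odd t) (hn : n < t) :
    (wfun t n = 0 ∧ wfun t ((n + 1) % t) = 1) ∨
    (wfun t n = 1 ∧ wfun t ((n + 1) % t) = 2) ∨
    (wfun t n = 2 ∧ wfun t ((n + 1) % t) = 0) ∨
    (wfun t n = 1 ∧ wfun t ((n + 1) % t) = 0) := by
  obtain ⟨k, hk⟩ := hodd
  unfold wfun
  rcases lt_trichotomy n (t - 2) with h | h | h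
  · have h1 : (n + 1) % t = n + 1 := Nat.mod_eq_of_lt (by omega)
    rw [h1, if_pos h]
    rcases lt_trichotomy (n + 1) (t - 2) with h2 | h2 | h2
    · rw [if_pos h2]
      rcases Nat.even_or_odd n with he | ho
      · left
        obtain ⟨m, hm⟩ := he
        have : n % 2 = 0 := by omega
        have : (n+1) % 2 = 1 := by omega
        constructor <;> simp_all
      · right; right; right
        obtain ⟨m, hm⟩ := ho
        have : n % 2 = 1 := by omega
        have : (n+1) % 2 = 0 := by omega
        constructor <;> simp_all
    · rw [if_neg (by omega), if_pos h2]
      left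
      have : n % 2 = 0 := by omega
      simp_all
    · omega
  · have h1 : (n + 1) % t = n + 1 := Nat.mod_eq_of_lt (by omega)
    rw [h1, if_neg (by omega), if_pos h, if_neg (by omega), if_neg (by omega)]
    right; left; exact ⟨rfl, rfl⟩
  · have hn1 : n = t - 1 := by omega
    have h1 : (n + 1) % t = 0 := by
      have : n + 1 = t := by omega
      simp [this]
    rw [h1, if_neg (by omega), if_neg (by omega), if_pos (by omega)]
    right; right; left
    constructor
    · rfl
    · simp
lemma blowup_helper (t : ℕ) (a a' : ZMod 3) (ha : a' ≠ a)
    (iv jv : ℕ) (hiv : iv < t) (hjv : jv < t) (b : Bool)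
    (he : ({(a, false), (a, true), (a', b)} : Finset (ZMod 3 × Bool)) ∈ Q3Edges) :
    ({((a, false), (⟨iv, hiv⟩ : Fin t)), ((a, true), ⟨iv, hiv⟩), ((a', b), ⟨jv, hjv⟩)} :
      Finset ((ZMod 3 × Bool) × Fin t)) ∈ blowupEdges Q3Edges t := by
  refine ⟨_, he, fun v => if v.1 = a then ⟨iv, hiv⟩ else ⟨jv, hjv⟩, ?_⟩
  simp [Finset.image_insert, Finset.image_singleton, ha]

/-- For every odd `t ≥ 5`, the ring `R_t` is contained in some blowup of `Q_3`:
there are `s` and an injective edge-preserving map from `R_t` into `Q_3(s)`. -/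
theorem odd_ring_in_Q3_blowup (t : ℕ) (ht : 5 ≤ t) (hodd : Odd t) :
    ∃ (s : ℕ) (f : ZMod t × Bool → (ZMod 3 × Bool) × Fin s),
      Function.Injective f ∧
      ∀ e ∈ ringEdges t, Finset.image f e ∈ blowupEdges Q3Edges s := by
  haveI : NeZero t := ⟨by omega⟩
  haveI : Fact (1 < t) := ⟨by omega⟩
  refine ⟨t, fun p => ((wfun t p.1.val, p.2), ⟨p.1.val, ZMod.val_lt p.1⟩), ?_, ?_⟩
  · intro ⟨i, b⟩ ⟨j, c⟩ h
    simp only [Prod.mk.injEq, Fin.mk.injEq] at h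
    obtain ⟨⟨-, hbc⟩, hij⟩ := h
    exact Prod.ext (ZMod.val_injective t hij) hbc
  · rintro e ⟨i, b, rfl⟩
    have hval : (i + 1).val = (i.val + 1) % t := by
      rw [ZMod.val_add, ZMod.val_one]
    have himg : Finset.image (fun p : ZMod t × Bool =>
        ((wfun t p.1.val, p.2), (⟨p.1.val, ZMod.val_lt p.1⟩ : Fin t)))
        {(i, false), (i, true), (i + 1, b)} =
        {((wfun t i.val, false), ⟨i.val, ZMod.val_lt i⟩),
         ((wfun t i.val, true), ⟨i.val, ZMod.val_lt i⟩),
         ((wfun t (i + 1).val, b), ⟨(i + 1).val, ZMod.val_lt (i + 1)⟩)} := by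
      simp [Finset.image_insert, Finset.image_singleton]
    rw [himg]
    have harc := wfun_arc t i.val ht hodd (ZMod.val_lt i)
    rw [← hval] at harc
    rcases harc with ⟨h1, h2⟩ | ⟨h1, h2⟩ | ⟨h1, h2⟩ | ⟨h1, h2⟩ <;> rw [h1, h2]
    · exact blowup_helper t 0 1 (by decide) _ _ (ZMod.val_lt i) (ZMod.val_lt (i+1)) b
        (Or.inl ⟨0, b, by cases b <;> decide⟩)
    · exact blowup_helper t 1 2 (by decide) _ _ (ZMod.val_lt i) (ZMod.val_lt (i+1)) b
        (Or.inl ⟨1, b, by cases b <;> decide⟩)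
    · exact blowup_helper t 2 0 (by decide) _ _ (ZMod.val_lt i) (ZMod.val_lt (i+1)) b
        (Or.inl ⟨2, b, by cases b <;> decide⟩)
    · exact blowup_helper t 1 0 (by decide) _ _ (ZMod.val_lt i) (ZMod.val_lt (i+1)) b
        (Or.inr ⟨b, rfl⟩)
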